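/- arXiv:1609.01337 — 5 statements merged into one kernel-verified Lean document; each statement's English description precedes it below -/
import Mathlib

section
/- Let T : F_q^3 → F_q satisfy Property (a) and Property (c). Then for every fixed z ∈ F_q, the function f_z(x,y) = T(x,y,z) - z is a κ-function: every nonzero element d of F_q has exactly q - 1 preimages (x,y) ∈ F_q^2 under f_z, and 0 has exactly 2q - 1 preimages. -/
theorem stmt_4 {F : Type*} [Field F] [Fintype F] [DecidableEq F] (T : F → F → F → F)
    (ha : ∀ a b z : F, T a 0 z = z ∧ T 0 b z = z)
    (hc : ∀ a b c d : F, a ≠ c → ∃! x : F, T x a b = T x c d) :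
    ∀ z : F,
      (∀ d : F, d ≠ 0 →
        (Finset.univ.filter (fun p : F × F => T p.1 p.2 z - z = d)).card
          = Fintype.card F - 1) ∧
      (Finset.univ.filter (fun p : F × F => T p.1 p.2 z - z = 0)).card
          = 2 * Fintype.card F - 1 := by
  intro z
  have key : ∀ y v : F, y ≠ 0 → (∑ x : F, if T x y z = v then 1 else 0) = 1 := by
    intro y v hy
    obtain ⟨x₀, hx₀, huniq⟩ := hc y z 0 v hy
    have hsimp : ∀ x : F, T x 0 v = v := fun x => (ha x 0 v).1
    rw [← Finset.card_filter, Finset.card_eq_one]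
    refine ⟨x₀, ?_⟩
    ext x
    simp only [Finset.mem_filter, Finset.mem_univ, true_and, Finset.mem_singleton]
    constructor
    · intro h; exact huniq x (h.trans (hsimp x).symm)
    · intro h; subst h; rw [hx₀, hsimp]
  have hq : 0 < Fintype.card F := Fintype.card_pos
  constructor
  · intro d hd
    rw [Finset.card_filter, Fintype.sum_prod_type, Finset.sum_comm]
    have hrow : ∀ y : F, (∑ x : F, if T x y z - z = d then 1 else 0)
        = if y = 0 then 0 else 1 := by
      intro y
      by_cases hy : y = 0
      · subst hy
        rw [if_pos rfl]
        apply Finset.sum_eq_zero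
        intro x _
        rw [(ha x 0 z).1]
        simp [sub_self, hd.symm]
      · rw [if_neg hy]
        have h2 : (∑ x : F, if T x y z - z = d then 1 else 0)
            = ∑ x : F, if T x y z = z + d then 1 else 0 := by
          apply Finset.sum_congr rfl
          intro x _
          simp only [sub_eq_iff_eq_add']
        rw [h2, key y (z + d) hy]
    simp_rw [hrow]
    rw [Finset.sum_ite, Finset.sum_const_zero, Finset.sum_const, smul_eq_mul, mul_one,
      Finset.filter_ne', Finset.card_erase_of_mem (Finset.mem_univ 0), Finset.card_univ,
      zero_add]
  · rw [Finset.card_filter, Fintype.sum_prod_type, Finset.sum_comm]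
    have hrow : ∀ y : F, (∑ x : F, if T x y z - z = 0 then 1 else 0)
        = if y = 0 then Fintype.card F else 1 := by
      intro y
      by_cases hy : y = 0
      · subst hy
        rw [if_pos rfl]
        have : ∀ x ∈ Finset.univ, (if T x (0:F) z - z = 0 then 1 else 0) = 1 := by
          intro x _
          rw [(ha x 0 z).1]
          simp
        rw [Finset.sum_congr rfl this, Finset.sum_const, smul_eq_mul, mul_one,
          Finset.card_univ]
      · rw [if_neg hy]
        have h2 : (∑ x : F, if T x y z - z = 0 then 1 else 0)
            = ∑ x : F, if T x y z = z then 1 else 0 := by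
          apply Finset.sum_congr rfl
          intro x _
          simp only [sub_eq_zero]
        rw [h2, key y z hy]
    simp_rw [hrow]
    rw [Finset.sum_ite, Finset.sum_const, Finset.sum_const, smul_eq_mul, smul_eq_mul,
      mul_one, Finset.filter_eq', if_pos (Finset.mem_univ 0), Finset.card_singleton,
      one_mul, Finset.filter_ne', Finset.card_erase_of_mem (Finset.mem_univ 0),
      Finset.card_univ]
    omega
end

section
/- Let T : F_q^3 → F_q satisfy Property (a) and Property (e). Then for every fixed z ∈ F_q, the function (x,y) ↦ T(x,y,z) - z takes the value 0 exactly 2q - 1 times and each nonzero value exactly q - 1 times on F_q^2. -/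
theorem stmt_5 {F : Type*} [Field F] [Fintype F] [DecidableEq F] (T : F → F → F → F)
    (ha : ∀ a b z : F, T a 0 z = z ∧ T 0 b z = z)
    (he : ∀ a b c d : F, a ≠ c → ∃! p : F × F, T a p.1 p.2 = b ∧ T c p.1 p.2 = d) :
    ∀ z : F,
      (Finset.univ.filter (fun p : F × F => T p.1 p.2 z - z = 0)).card
          = 2 * Fintype.card F - 1 ∧
      (∀ d : F, d ≠ 0 →
        (Finset.univ.filter (fun p : F × F => T p.1 p.2 z - z = d)).card
          = Fintype.card F - 1) := by
  intro z
  have uniq : ∀ x : F, x ≠ 0 → ∀ b : F, ∃! y : F, T x y z = b := by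
    intro x hx b
    obtain ⟨p, ⟨h1, h2⟩, hu⟩ := he x b 0 z hx
    have hz : p.2 = z := by rw [(ha 0 p.1 p.2).2] at h2; exact h2
    refine ⟨p.1, by rw [← hz]; exact h1, ?_⟩
    intro y' hy'
    have h := hu (y', z) ⟨hy', (ha 0 y' z).2⟩
    exact congrArg Prod.fst h
  have hq : 1 ≤ Fintype.card F := Fintype.card_pos
  constructor
  · have hset : (Finset.univ.filter (fun p : F × F => T p.1 p.2 z - z = 0))
        = Finset.univ.filter (fun p : F × F => p.1 = 0 ∨ p.2 = 0) := by
      ext p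
      simp only [Finset.mem_filter, Finset.mem_univ, true_and, sub_eq_zero]
      constructor
      · intro h
        by_contra hc
        push_neg at hc
        obtain ⟨y, hy, hyu⟩ := uniq p.1 hc.1 z
        have h2 : p.2 = y := hyu p.2 h
        have h0 : (0 : F) = y := hyu 0 (ha p.1 0 z).1
        exact hc.2 (h2.trans h0.symm)
      · rintro (h | h)
        · rw [h]; exact (ha 0 p.2 z).2
        · rw [h]; exact (ha p.1 0 z).1
    rw [hset, Finset.filter_or]
    have hA : (Finset.univ.filter (fun p : F × F => p.1 = 0)).card = Fintype.card F := by
      have : (Finset.univ.filter (fun p : F × F => p.1 = 0))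
          = ({(0 : F)} : Finset F) ×ˢ Finset.univ := by
        ext ⟨x, y⟩; simp [Finset.mem_product, eq_comm]
      rw [this, Finset.card_product]
      simp
    have hB : (Finset.univ.filter (fun p : F × F => p.2 = 0)).card = Fintype.card F := by
      have : (Finset.univ.filter (fun p : F × F => p.2 = 0))
          = Finset.univ ×ˢ ({(0 : F)} : Finset F) := by
        ext ⟨x, y⟩; simp [Finset.mem_product, eq_comm]
      rw [this, Finset.card_product]
      simp
    have hI : ((Finset.univ.filter (fun p : F × F => p.1 = 0))
        ∩ (Finset.univ.filter (fun p : F × F => p.2 = 0))).card = 1 := by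
      have : ((Finset.univ.filter (fun p : F × F => p.1 = 0))
          ∩ (Finset.univ.filter (fun p : F × F => p.2 = 0)))
          = {((0 : F), (0 : F))} := by
        ext p
        simp only [Finset.mem_inter, Finset.mem_filter, Finset.mem_univ, true_and,
          Finset.mem_singleton, Prod.ext_iff]
      simp [this]
    have hU := Finset.card_union_add_card_inter
      (Finset.univ.filter (fun p : F × F => p.1 = 0))
      (Finset.univ.filter (fun p : F × F => p.2 = 0))
    rw [hA, hB, hI] at hU
    omega
  · intro d hd
    have hs : (Finset.univ.filter (fun x : F => x ≠ 0)).card = Fintype.card F - 1 := by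
      rw [Finset.filter_ne', Finset.card_erase_of_mem (Finset.mem_univ 0), Finset.card_univ]
    rw [← hs]
    refine (Finset.card_bij
      (fun x hx => (x, (uniq x (by simpa using hx) (d + z)).choose)) ?_ ?_ ?_).symm
    · intro x hx
      simp only [Finset.mem_filter, Finset.mem_univ, true_and]
      have := (uniq x (by simpa using hx) (d + z)).choose_spec.1
      rw [this]; ring
    · intro a ha' b hb' h
      exact (Prod.ext_iff.mp h).1
    · intro p hp
      simp only [Finset.mem_filter, Finset.mem_univ, true_and] at hp
      have hp' : T p.1 p.2 z = d + z := by
        rw [← hp]; ring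
      have hx : p.1 ≠ 0 := by
        intro h0
        apply hd
        rw [h0, (ha 0 p.2 z).2] at hp'
        linear_combination -hp'
      refine ⟨p.1, by simpa using hx, ?_⟩
      have h2 : p.2 = (uniq p.1 hx (d + z)).choose :=
        (uniq p.1 hx (d + z)).choose_spec.2 p.2 hp'
      exact Prod.ext rfl h2.symm
end

section
/- Let T : F_q^3 → F_q satisfy Property (a) and Property (c). Then T is equidistributive on F_q^3: for every d ∈ F_q, the equation T(x,y,z) = d has exactly q^2 solutions (x,y,z) ∈ F_q^3. -/
theorem stmt_6 {F : Type*} [Field F] [Fintype F] [DecidableEq F] (T : F → F → F → F)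
    (ha : ∀ a b z : F, T a 0 z = z ∧ T 0 b z = z)
    (hc : ∀ a b c d : F, a ≠ c → ∃! x : F, T x a b = T x c d) :
    ∀ d : F,
      (Finset.univ.filter (fun p : F × F × F => T p.1 p.2.1 p.2.2 = d)).card
        = (Fintype.card F) ^ 2 := by
  intro d
  classical
  have key : ∀ y z : F, (Finset.univ.filter (fun x => T x y z = d)).card
      = if y = 0 then (if z = d then Fintype.card F else 0) else 1 := by
    intro y z
    by_cases hy : y = 0
    · subst hy
      rw [if_pos rfl]
      by_cases hz : z = d
      · subst hz
        rw [if_pos rfl]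
        have : (Finset.univ.filter (fun x => T x 0 z = z)) = Finset.univ := by
          apply Finset.filter_true_of_mem
          intro x _
          exact (ha x 0 z).1
        rw [this, Finset.card_univ]
      · rw [if_neg hz]
        have : (Finset.univ.filter (fun x => T x 0 z = d)) = ∅ := by
          apply Finset.filter_false_of_mem
          intro x _
          rw [(ha x 0 z).1]
          exact hz
        rw [this, Finset.card_empty]
    · rw [if_neg hy]
      obtain ⟨x, hx, hu⟩ := hc y z 0 d hy
      have hx' : T x y z = d := by rw [hx, (ha x 0 d).1]
      refine Finset.card_eq_one.mpr ⟨x, ?_⟩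
      ext t
      simp only [Finset.mem_filter, Finset.mem_univ, true_and, Finset.mem_singleton]
      constructor
      · intro ht
        exact hu t (by show T t y z = T t 0 d; rw [ht, (ha t 0 d).1])
      · rintro rfl
        exact hx'
  rw [Finset.card_filter]
  rw [Fintype.sum_prod_type, Finset.sum_comm]
  have : ∀ yz : F × F, (∑ x : F, if T x yz.1 yz.2 = d then 1 else 0)
      = if yz.1 = 0 then (if yz.2 = d then Fintype.card F else 0) else 1 := by
    intro yz
    rw [← key yz.1 yz.2, Finset.card_filter]
  rw [Finset.sum_congr rfl (fun yz _ => this yz)]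
  rw [Fintype.sum_prod_type]
  have hinner : ∀ y : F, (∑ z : F, if y = 0 then (if z = d then Fintype.card F else 0) else 1)
      = Fintype.card F := by
    intro y
    by_cases hy : y = 0
    · simp [hy, Finset.sum_ite_eq']
    · simp [hy]
  rw [Finset.sum_congr rfl (fun y _ => hinner y)]
  simp [pow_two, Finset.card_univ]
end

section
/- Let T : F_q^3 → F_q be a planar ternary ring (satisfying Properties (a)–(e)) of the linear form T(x,y,z) = M(x,y) + z for a function M : F_q^2 → F_q with M(x,1) = x for all x (so the additive loop is field addition). Then for every a ∈ F_q with a ∉ {0,1}, the function f_a(x) = M(x,a) - x is a complete mapping of F_q: both f_a and x ↦ f_a(x) + x are bijections of F_q. -/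
theorem stmt_10 {F : Type*} [Field F] [Fintype F]
    (M : F → F → F) (T : F → F → F → F)
    (hT : ∀ x y z : F, T x y z = M x y + z)
    (ha : ∀ a b z : F, T a 0 z = z ∧ T 0 b z = z)
    (hb : ∀ x y : F, T x 1 0 = x ∧ T 1 y 0 = y)
    (hc : ∀ a b c d : F, a ≠ c → ∃! x : F, T x a b = T x c d)
    (hd : ∀ a b c : F, ∃! z : F, T a b z = c)
    (he : ∀ a b c d : F, a ≠ c → ∃! p : F × F, T a p.1 p.2 = b ∧ T c p.1 p.2 = d)
    (hM1 : ∀ x : F, M x 1 = x) :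
    ∀ a : F, a ≠ 0 → a ≠ 1 →
      Function.Bijective (fun x : F => M x a - x) ∧
      Function.Bijective (fun x : F => (M x a - x) + x) := by
  intro a ha0 ha1
  have hM0 : ∀ x : F, M x 0 = 0 := by
    intro x
    have h := (ha x 0 0).1
    rw [hT] at h
    simpa using h
  constructor
  · rw [← Finite.injective_iff_bijective]
    intro x y hxy
    simp only at hxy
    obtain ⟨t, ht, huniq⟩ := hc a 0 1 (M x a - x) ha1
    have hx : T x a 0 = T x 1 (M x a - x) := by
      rw [hT, hT, hM1]; ring
    have hy : T y a 0 = T y 1 (M x a - x) := by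
      rw [hT, hT, hM1, hxy]; ring
    rw [huniq x hx, huniq y hy]
  · rw [← Finite.injective_iff_bijective]
    intro x y hxy
    simp only [sub_add_cancel] at hxy
    by_contra hne
    obtain ⟨p, hp, huniq⟩ := he x (M x a) y (M x a) hne
    have h1 : ((a, (0 : F)) : F × F) = p := by
      apply huniq
      constructor
      · rw [hT]; simp
      · rw [hT]; simp [hxy]
    have h2 : (((0 : F), M x a) : F × F) = p := by
      apply huniq
      constructor
      · rw [hT]; simp [hM0]
      · rw [hT]; simp [hM0]
    rw [← h2] at h1
    exact ha0 (congrArg Prod.fst h1)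
end

section
/- Let T : F_q^3 → F_q satisfy Properties (a), (c), (d), (e), and let T be represented by its unique reduced polynomial in F_q[X,Y,Z] (degree < q in each variable). Then the degree of this polynomial in Z is at most q - 2, i.e., the coefficient of every monomial X^i Y^j Z^{q-1} is zero. -/
open MvPolynomial Finset in
private lemma sum_pow_card_sub_one' {F : Type*} [Field F] [Fintype F]
    (hq : 3 ≤ Fintype.card F) : ∑ x : F, x ^ (Fintype.card F - 1) = -1 := by
  classical
  have hq1 : 1 ≤ Fintype.card F := by omega
  have h0 : Fintype.card F - 1 ≠ 0 := by omega
  have h : ∑ x : F, x ^ (Fintype.card F - 1)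
      = ∑ x ∈ Finset.univ.filter (fun x : F => x ≠ 0), 1 := by
    rw [Finset.sum_filter]
    refine Finset.sum_congr rfl fun x _ => ?_
    by_cases hx : x = 0
    · simp [hx, zero_pow h0]
    · simp [hx, FiniteField.pow_card_sub_one_eq_one x hx]
  have hcard : (Finset.univ.filter (fun x : F => x ≠ 0)).card = Fintype.card F - 1 := by
    rw [Finset.filter_ne', Finset.card_erase_of_mem (Finset.mem_univ _), Finset.card_univ]
  rw [h, Finset.sum_const, nsmul_eq_mul, mul_one, hcard,
    Nat.cast_sub hq1, FiniteField.cast_card_eq_zero, Nat.cast_one, zero_sub]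

theorem stmt_19 {F : Type*} [Field F] [Fintype F]
    (hq : 3 ≤ Fintype.card F) (T : F → F → F → F)
    (ha : ∀ a b z : F, T a 0 z = z ∧ T 0 b z = z)
    (hc : ∀ a b c d : F, a ≠ c → ∃! x : F, T x a b = T x c d)
    (hd : ∀ a b c : F, ∃! z : F, T a b z = c)
    (he : ∀ a b c d : F, a ≠ c → ∃! p : F × F, T a p.1 p.2 = b ∧ T c p.1 p.2 = d)
    (P : MvPolynomial (Fin 3) F)
    (hred : ∀ i : Fin 3, P.degreeOf i < Fintype.card F)
    (hrep : ∀ x y z : F, MvPolynomial.eval ![x, y, z] P = T x y z) :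
    P.degreeOf 2 ≤ Fintype.card F - 2 := by
  classical
  set q := Fintype.card F with hqdef
  -- exponents bounded by q - 1
  have hbound : ∀ m ∈ P.support, ∀ i : Fin 3, m i ≤ q - 1 := by
    intro m hm i
    have h1 : m i ≤ P.degreeOf i := MvPolynomial.degreeOf_le_iff.mp le_rfl m hm
    have h2 := hred i
    omega
  -- Step 1: for every a b, the sum over z of T a b z is 0
  have hsum0 : ∀ a b : F, ∑ z : F, T a b z = 0 := by
    intro a b
    have hbij : Function.Bijective (fun z => T a b z) :=
      (Function.bijective_iff_existsUnique _).mpr (fun c => hd a b c)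
    have h := Fintype.sum_bijective _ hbij (fun z => T a b z) id (fun z => rfl)
    have h1 : (1 : ℕ) < q - 1 := by omega
    have h2 := FiniteField.sum_pow_lt_card_sub_one F 1 h1
    simpa [h] using h2
  -- the "coefficient of Z^(q-1)" polynomial
  set s := P.support.filter (fun m => m 2 = q - 1) with hs
  set d : (Fin 3 →₀ ℕ) → (Fin 3 →₀ ℕ) :=
    fun m => Finsupp.single 0 (m 0) + Finsupp.single 1 (m 1) with hdm
  set R : MvPolynomial (Fin 3) F :=
    ∑ m ∈ s, MvPolynomial.monomial (d m) (MvPolynomial.coeff m P) with hR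
  -- evaluation of R
  have hevalR : ∀ v : Fin 3 → F, MvPolynomial.eval v R
      = ∑ m ∈ s, MvPolynomial.coeff m P * v 0 ^ m 0 * v 1 ^ m 1 := by
    intro v
    rw [hR, map_sum]
    refine Finset.sum_congr rfl fun m hm => ?_
    rw [MvPolynomial.eval_monomial, hdm]
    rw [Finsupp.prod_add_index' (fun i => pow_zero _) (fun i b c => pow_add _ _ _)]
    simp [Finsupp.prod_single_index, mul_assoc]
    
  -- the key sum computation: eval v R = 0 for all v
  have hzero : ∀ v : Fin 3 → F, MvPolynomial.eval v R = 0 := by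
    intro v
    have key : ∑ z : F, MvPolynomial.eval ![v 0, v 1, z] P = - MvPolynomial.eval v R := by
      have expand : ∀ z : F, MvPolynomial.eval ![v 0, v 1, z] P
          = ∑ m ∈ P.support, MvPolynomial.coeff m P * v 0 ^ m 0 * v 1 ^ m 1 * z ^ m 2 := by
        intro z
        rw [MvPolynomial.eval_eq']
        refine Finset.sum_congr rfl fun m hm => ?_
        rw [Fin.prod_univ_three]
        simp [mul_assoc]
      calc ∑ z : F, MvPolynomial.eval ![v 0, v 1, z] P
          = ∑ m ∈ P.support, MvPolynomial.coeff m P * v 0 ^ m 0 * v 1 ^ m 1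
              * ∑ z : F, z ^ m 2 := by
            rw [Finset.sum_congr rfl fun z (_ : z ∈ Finset.univ) => expand z,
              Finset.sum_comm]
            exact Finset.sum_congr rfl fun m _ => by rw [Finset.mul_sum]
        _ = ∑ m ∈ s, MvPolynomial.coeff m P * v 0 ^ m 0 * v 1 ^ m 1 * (-1) := by
            rw [hs, Finset.sum_filter]
            refine Finset.sum_congr rfl fun m hm => ?_
            by_cases hm2 : m 2 = q - 1
            · rw [if_pos hm2, hm2, sum_pow_card_sub_one' hq]
            · have : m 2 < q - 1 := lt_of_le_of_ne (hbound m hm 2) hm2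
              rw [if_neg hm2, FiniteField.sum_pow_lt_card_sub_one F _ this, mul_zero]
        _ = - MvPolynomial.eval v R := by
            rw [hevalR, ← Finset.sum_neg_distrib]
            exact Finset.sum_congr rfl fun m _ => by ring
    have : ∑ z : F, MvPolynomial.eval ![v 0, v 1, z] P = 0 := by
      rw [Finset.sum_congr rfl fun z _ => hrep (v 0) (v 1) z]
      exact hsum0 _ _
    rw [this] at key
    exact neg_eq_zero.mp key.symm
  -- R is reduced, hence R = 0
  have hRmem : R ∈ MvPolynomial.restrictDegree (Fin 3) F (q - 1) := by
    rw [MvPolynomial.mem_restrictDegree]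
    intro n hn i
    have hsub : R.support ⊆ s.biUnion (fun m => (MvPolynomial.monomial (d m)
        (MvPolynomial.coeff m P)).support) := by
      rw [hR]; exact MvPolynomial.support_sum
    obtain ⟨m, hm, hn2⟩ := Finset.mem_biUnion.mp (hsub hn)
    have := MvPolynomial.support_monomial_subset hn2
    rw [Finset.mem_singleton] at this
    subst this
    have hmP : m ∈ P.support := (Finset.mem_filter.mp hm).1
    fin_cases i
    · simpa [hdm] using hbound m hmP 0
    · simpa [hdm] using hbound m hmP 1
    · simp [hdm]
  have hR0 : R = 0 := by
    have hup : Function.Injective (ULift.up : Fin 3 → ULift (Fin 3)) :=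
      fun a b h => congrArg ULift.down h
    set R' : MvPolynomial (ULift (Fin 3)) F := MvPolynomial.rename ULift.up R with hR'
    have hzero' : ∀ v : ULift (Fin 3) → F, MvPolynomial.eval v R' = 0 := by
      intro v
      rw [hR', MvPolynomial.eval_rename]
      exact hzero _
    have hmem' : R' ∈ MvPolynomial.restrictDegree (ULift (Fin 3)) F (q - 1) := by
      rw [MvPolynomial.mem_restrictDegree]
      intro n hn i
      rw [hR', MvPolynomial.support_rename_of_injective hup] at hn
      obtain ⟨n0, hn0, rfl⟩ := Finset.mem_image.mp hn
      rw [show i = ULift.up i.down from rfl, Finsupp.mapDomain_apply hup]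
      exact (MvPolynomial.mem_restrictDegree _ _ _).mp hRmem n0 hn0 i.down
    have : R' = 0 := MvPolynomial.eq_zero_of_eval_eq_zero _ _ R' hzero' hmem'
    have hinj : Function.Injective
        (⇑(MvPolynomial.rename (ULift.up : Fin 3 → ULift (Fin 3)) :
          MvPolynomial (Fin 3) F →ₐ[F] MvPolynomial (ULift (Fin 3)) F)) :=
      MvPolynomial.rename_injective _ hup
    have h0 : MvPolynomial.rename (ULift.up : Fin 3 → ULift (Fin 3)) R
        = MvPolynomial.rename (ULift.up : Fin 3 → ULift (Fin 3)) (0 : MvPolynomial (Fin 3) F) := by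
      rw [map_zero, ← hR']
      exact this
    exact hinj h0
  -- conclude
  rw [MvPolynomial.degreeOf_le_iff]
  intro m hm
  by_contra hcon
  have hm2 : m 2 = q - 1 := by
    have := hbound m hm 2; omega
  have hms : m ∈ s := Finset.mem_filter.mpr ⟨hm, hm2⟩
  have hcoeff : MvPolynomial.coeff (d m) R = MvPolynomial.coeff m P := by
    rw [hR, MvPolynomial.coeff_sum]
    rw [Finset.sum_eq_single_of_mem m hms]
    · rw [MvPolynomial.coeff_monomial, if_pos rfl]
    · intro m' hm' hne
      rw [MvPolynomial.coeff_monomial, if_neg]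
      intro heq
      apply hne
      have h0 : m' 0 = m 0 := by
        have := DFunLike.congr_fun heq 0
        simpa [hdm] using this
      have h1 : m' 1 = m 1 := by
        have := DFunLike.congr_fun heq 1
        simpa [hdm] using this
      have h2 : m' 2 = m 2 := by
        rw [(Finset.mem_filter.mp hm').2, hm2]
      ext i
      fin_cases i <;> assumption
  rw [hR0, MvPolynomial.coeff_zero] at hcoeff
  exact (MvPolynomial.mem_support_iff.mp hm) hcoeff.symm
end
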